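/- Suppose 0 < ε_r < 1 and 0 < ε_a/ε_r + ε_a ≤ 1/2. Let X₁, ..., Xₙ be i.i.d. [0,1]-valued random variables with mean μ satisfying ε_a/ε_r < μ < 1, and let μ̂ be their sample mean. Then Pr{μ̂ ≥ (1 + ε_r)μ} ≤ exp(n·g(ε_a, ε_a/ε_r)), where g(δ, ν) = (ν+δ)·ln(ν/(ν+δ)) + (1-ν-δ)·ln((1-ν)/(1-ν-δ)). -/

import Mathlib

/-!
Chernoff's method, with the parameter `t = log E` that is optimal when the mean is
`ν = εa / εr`. By convexity of `exp`, the mgf of a `[0, 1]`-valued variable with mean `μ` is at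
most `1 - μ + μ E`, so the tail probability is at most `exp (n h(μ))` with
`h(μ) = -(1 + εr) μ log E + log (1 - μ + μ E)`. At `μ = ν` this is `n g(εa, ν)`, and `h` is
concave with `h'(ν) ≤ 0`, so `h(μ) ≤ h(ν)` for every `μ ≥ ν`.
-/

open MeasureTheory ProbabilityTheory Real

/-- The paper's `g(δ, ν)`, which is `-KL(Bernoulli (ν + δ) ‖ Bernoulli ν)`. -/
noncomputable def chernoffExponent (δ ν : ℝ) : ℝ :=
  (ν + δ) * log (ν / (ν + δ)) + (1 - ν - δ) * log ((1 - ν) / (1 - ν - δ))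

lemma Real.exp_mul_le_one_sub_add_mul_exp {x : ℝ} (hx : x ∈ Set.Icc (0 : ℝ) 1) (t : ℝ) :
    exp (t * x) ≤ 1 - x + x * exp t := by
  have h := convexOn_exp.2 (Set.mem_univ 0) (Set.mem_univ t) (sub_nonneg.2 hx.2) hx.1
    (sub_add_cancel 1 x)
  simp only [smul_eq_mul, mul_zero, zero_add, exp_zero, mul_one] at h
  rwa [mul_comm]

lemma Real.log_le_log_add_sub_div {x y : ℝ} (hx : 0 < x) (hy : 0 < y) :
    log y ≤ log x + (y - x) / x := by
  have h := log_le_sub_one_of_pos (div_pos hy hx)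
  rw [log_div hy.ne' hx.ne'] at h
  rw [sub_div, div_self hx.ne']
  linarith

section Chernoff

variable {Ω : Type*} [MeasurableSpace Ω] {P : Measure Ω} [IsProbabilityMeasure P]

lemma mgf_le_one_sub_add_mul_exp {X : Ω → ℝ} (hX : AEMeasurable X P)
    (hb : ∀ᵐ ω ∂P, X ω ∈ Set.Icc (0 : ℝ) 1) (t : ℝ) :
    mgf X P t ≤ 1 - P[X] + P[X] * exp t := by
  have hint : Integrable X P := .of_mem_Icc 0 1 hX hb
  have hint' : Integrable (fun ω => 1 - X ω) P := (integrable_const 1).sub hint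
  calc mgf X P t ≤ ∫ ω, (1 - X ω + X ω * exp t) ∂P :=
        integral_mono_ae (integrable_exp_mul_of_mem_Icc hX hb) (hint'.add (hint.mul_const _))
          (hb.mono fun ω hω => exp_mul_le_one_sub_add_mul_exp hω t)
    _ = 1 - P[X] + P[X] * exp t := by
      rw [integral_add hint' (hint.mul_const _),
        integral_sub (integrable_const 1) hint, integral_mul_const]
      simp

lemma measure_mul_card_le_sum_le {ι : Type*} [Fintype ι] {X : ι → Ω → ℝ}
    (hmeas : ∀ i, Measurable (X i)) (hindep : iIndepFun X P)
    (hb : ∀ i, ∀ᵐ ω ∂P, X i ω ∈ Set.Icc (0 : ℝ) 1) {μ : ℝ} (hmean : ∀ i, P[X i] = μ)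
    {t : ℝ} (ht : 0 ≤ t) (q : ℝ) :
    P {ω | Fintype.card ι * q ≤ ∑ i, X i ω}
      ≤ ENNReal.ofReal ((exp (-t * q) * (1 - μ + μ * exp t)) ^ Fintype.card ι) := by
  have hsum : ∀ ω, ∑ i, X i ω = (∑ i, X i) ω := fun ω => (Finset.sum_apply ω _ _).symm
  simp_rw [hsum]
  rw [← ofReal_measureReal]
  refine ENNReal.ofReal_le_ofReal ?_
  calc P.real {ω | Fintype.card ι * q ≤ (∑ i, X i) ω}
      ≤ exp (-t * (Fintype.card ι * q)) * mgf (∑ i, X i) P t :=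
        measure_ge_le_exp_mul_mgf _ ht
          (hindep.integrable_exp_mul_sum hmeas fun i _ =>
            integrable_exp_mul_of_mem_Icc (hmeas i).aemeasurable (hb i))
    _ = exp (-t * q) ^ Fintype.card ι * ∏ i, mgf (X i) P t := by
      rw [hindep.mgf_sum hmeas, ← exp_nat_mul]
      ring_nf
    _ ≤ exp (-t * q) ^ Fintype.card ι * (1 - μ + μ * exp t) ^ Fintype.card ι := by
      gcongr
      rw [← Finset.card_univ, ← Finset.prod_const]
      refine Finset.prod_le_prod (fun i _ => mgf_nonneg) fun i _ => ?_
      simpa only [hmean i] using mgf_le_one_sub_add_mul_exp (hmeas i).aemeasurable (hb i) t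
    _ = _ := (mul_pow _ _ _).symm

end Chernoff

theorem exists_exp_neg_mul_mul_le_exp_chernoffExponent {ν r : ℝ} (hν : 0 < ν) (hr : 0 < r)
    (hp : ν * (1 + r) < 1) :
    ∃ t, 0 ≤ t ∧ ∀ μ, ν ≤ μ →
      exp (-t * ((1 + r) * μ)) * (1 - μ + μ * exp t) ≤ exp (chernoffExponent (ν * r) ν) := by
  set c := (1 - ν) / (1 - ν * (1 + r)) with hc
  have hc1 : 1 < c := by rw [hc, one_lt_div (by linarith)]; nlinarith
  set E := (1 + r) * c with hE
  have hE1 : 1 < E := one_lt_mul_of_lt_of_le (by linarith) hc1.le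
  have hmean : 1 - ν + ν * E = c := by
    have hq : 1 - ν * (1 + r) ≠ 0 := by linarith
    rw [hE, hc]; field_simp; ring
  have hvalue : chernoffExponent (ν * r) ν = -log E * (ν * (1 + r)) + log c := by
    have hratio : ν / (ν + ν * r) = (1 + r)⁻¹ := by field_simp
    rw [chernoffExponent, hratio, show 1 - ν - ν * r = 1 - ν * (1 + r) by ring, ← hc, log_inv,
      hE, log_mul (by positivity) (by positivity)]
    ring
  have hslope : (E - 1) / c ≤ (1 + r) * log E := by
    calc (E - 1) / c = (1 + r) * (1 - E⁻¹) := by rw [hE]; field_simp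
      _ ≤ (1 + r) * log E :=
        mul_le_mul_of_nonneg_left (one_sub_inv_le_log_of_pos (by positivity)) (by positivity)
  refine ⟨log E, (log_pos hE1).le, fun μ hμ => ?_⟩
  have hpos : 0 < 1 - μ + μ * E := by nlinarith
  have htangent : log (1 - μ + μ * E) ≤ log c + (μ - ν) * ((1 + r) * log E) :=
    calc log (1 - μ + μ * E) ≤ log c + (1 - μ + μ * E - c) / c :=
          log_le_log_add_sub_div (by positivity) hpos
      _ = log c + (μ - ν) * ((E - 1) / c) := by rw [← hmean]; ring
      _ ≤ log c + (μ - ν) * ((1 + r) * log E) := by gcongr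
  rw [exp_log (by positivity), hvalue, ← exp_log hpos, ← exp_add, exp_le_exp]
  linarith

theorem stmt_17_general (εa εr : ℝ) (hεa : 0 < εa) (hεr : 0 < εr)
    (hc : εa / εr + εa ≤ 1 / 2)
    {Ω : Type*} [MeasurableSpace Ω] (P : Measure Ω) [IsProbabilityMeasure P]
    (n : ℕ) (hn : 0 < n) (X : Fin n → Ω → ℝ)
    (hmeas : ∀ i, Measurable (X i))
    (hindep : iIndepFun (m := fun _ => Real.measurableSpace) X P)
    (hbound : ∀ i ω, X i ω ∈ Set.Icc (0 : ℝ) 1)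
    (μ : ℝ) (hμ : εa / εr < μ) (hmean : ∀ i, ∫ ω, X i ω ∂P = μ) :
    P {ω | (1 + εr) * μ ≤ (∑ i, X i ω) / n}
      ≤ ENNReal.ofReal (Real.exp (n *
          ((εa / εr + εa) * Real.log ((εa / εr) / (εa / εr + εa)) +
           (1 - εa / εr - εa) * Real.log ((1 - εa / εr) / (1 - εa / εr - εa))))) := by
  set ν := εa / εr
  have hεa_eq : εa = ν * εr := (div_mul_cancel₀ εa hεr.ne').symm
  obtain ⟨t, ht, hexp⟩ := exists_exp_neg_mul_mul_le_exp_chernoffExponent (div_pos hεa hεr) hεr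
    (hp := by rw [mul_one_add, ← hεa_eq]; linarith)
  have hevent : {ω | (1 + εr) * μ ≤ (∑ i, X i ω) / n}
      = {ω | n * ((1 + εr) * μ) ≤ ∑ i, X i ω} := by
    ext ω
    rw [Set.mem_ofPred_eq, Set.mem_ofPred_eq, le_div_iff₀ (by positivity), mul_comm]
  calc P {ω | (1 + εr) * μ ≤ (∑ i, X i ω) / n}
      ≤ ENNReal.ofReal ((exp (-t * ((1 + εr) * μ)) * (1 - μ + μ * exp t)) ^ n) := by
        simpa only [hevent, Fintype.card_fin] using measure_mul_card_le_sum_le hmeas hindep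
          (fun i => ae_of_all P (hbound i)) hmean ht ((1 + εr) * μ)
    _ ≤ ENNReal.ofReal (exp (chernoffExponent (ν * εr) ν) ^ n) := by
        have hμ0 : 0 ≤ μ := (div_pos hεa hεr).le.trans hμ.le
        have hmgf : 0 ≤ 1 - μ + μ * exp t := by nlinarith [one_le_exp ht]
        gcongr
        exact hexp μ hμ.le
    _ = _ := by rw [← exp_nat_mul, ← hεa_eq]; rfl

theorem stmt_17 (εa εr : ℝ) (hεa : 0 < εa) (hεa1 : εa < 1) (hεr : 0 < εr) (hεr1 : εr < 1)
    (hc : εa / εr + εa ≤ 1 / 2)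
    {Ω : Type*} [MeasurableSpace Ω] (P : Measure Ω) [IsProbabilityMeasure P]
    (n : ℕ) (hn : 0 < n) (X : Fin n → Ω → ℝ)
    (hmeas : ∀ i, Measurable (X i))
    (hindep : iIndepFun (m := fun _ => Real.measurableSpace) X P)
    (hident : ∀ i j, IdentDistrib (X i) (X j) P P)
    (hbound : ∀ i ω, X i ω ∈ Set.Icc (0 : ℝ) 1)
    (μ : ℝ) (hμ : εa / εr < μ) (hμ2 : μ < 1) (hmean : ∀ i, ∫ ω, X i ω ∂P = μ) :
    P {ω | (1 + εr) * μ ≤ (∑ i, X i ω) / n}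
      ≤ ENNReal.ofReal (Real.exp (n *
          ((εa / εr + εa) * Real.log ((εa / εr) / (εa / εr + εa)) +
           (1 - εa / εr - εa) * Real.log ((1 - εa / εr) / (1 - εa / εr - εa))))) :=
  stmt_17_general εa εr hεa hεr hc P n hn X hmeas hindep hbound μ hμ hmean
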